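/- Let 𝐇 = H ⊕ Ĥ ⊕ H with J as above, let ν = dim H and ν̂ = dim Ĥ, and let τ ⊂ 𝐇 be a subspace with τ^⊤ = 𝐇 ⊖ Jτ. If τ^⊤ ⊂ τ, then dim τ ≥ ν + ν̂ and dim τ^⊤ ≤ ν. -/

import Mathlib

/- STATEMENT 14: if τ^⊤ ⊂ τ (τ^⊤ = 𝐇 ⊖ Jτ), then dim τ ≥ ν + ν̂ and dim τ^⊤ ≤ ν. -/

noncomputable section

abbrev bH (p q : ℕ) := EuclideanSpace ℂ (Fin p ⊕ Fin q ⊕ Fin p)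

def JL (p q : ℕ) : bH p q →ₗ[ℂ] bH p q where
  toFun y :=
    WithLp.toLp 2 (Sum.elim (fun i => -y (Sum.inr (Sum.inr i)))
      (Sum.elim (fun j => Complex.I * y (Sum.inr (Sum.inl j)))
        (fun i => y (Sum.inl i))) : (Fin p ⊕ Fin q ⊕ Fin p) → ℂ)
  map_add' x y := by
    ext i
    rcases i with i | j | i <;>
      simp only [PiLp.toLp_apply, Sum.elim_inl, Sum.elim_inr, PiLp.add_apply] <;> ring
  map_smul' c x := by
    ext i
    rcases i with i | j | i <;>
      simp only [PiLp.toLp_apply, Sum.elim_inl, Sum.elim_inr, PiLp.smul_apply, smul_eq_mul,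
        RingHom.id_apply] <;> ring
def phiL (p q : ℕ) : bH p q →ₗ[ℂ] EuclideanSpace ℂ (Fin p) where
  toFun h := WithLp.toLp 2 (fun i => h (Sum.inl i) - Complex.I * h (Sum.inr (Sum.inr i)) : Fin p → ℂ)
  map_add' x y := by
    ext i
    simp only [PiLp.toLp_apply, PiLp.add_apply]
    ring
  map_smul' c x := by
    ext i
    simp only [PiLp.toLp_apply, PiLp.smul_apply, smul_eq_mul, RingHom.id_apply]
    ring

lemma JL_inj (p q : ℕ) : Function.Injective (JL p q) := by
  rw [← LinearMap.ker_eq_bot]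
  ext x
  simp only [LinearMap.mem_ker, Submodule.mem_bot]
  constructor
  · intro hx
    ext a
    have h1 := congrFun (congrArg (fun (v : bH p q) => (v : (Fin p ⊕ Fin q ⊕ Fin p) → ℂ)) hx)
    rcases a with i | j | i
    · have := h1 (Sum.inr (Sum.inr i))
      simpa [JL] using this
    · have := h1 (Sum.inr (Sum.inl j))
      simp [JL] at this
      simpa [Complex.I_ne_zero] using this
    · have := h1 (Sum.inl i)
      simpa [JL, neg_eq_zero] using this
  · rintro rfl; exact map_zero _

theorem stmt14 (p q : ℕ) (τ : Submodule ℂ (bH p q))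
    (h : (τ.map (JL p q))ᗮ ≤ τ) :
    p + q ≤ Module.finrank ℂ τ ∧
      Module.finrank ℂ ((τ.map (JL p q))ᗮ : Submodule ℂ (bH p q)) ≤ p := by
  classical
  set W := (τ.map (JL p q))ᗮ with hWdef
  have hzero : ∀ x ∈ W, phiL p q x = 0 → x = 0 := by
    intro x hxW hphix
    have hxτ : x ∈ τ := h hxW
    have key : (inner ℂ ((JL p q) x) x : ℂ) = 0 :=
      hxW ((JL p q) x) (Submodule.mem_map_of_mem hxτ)
    set y : Fin q → ℂ := fun j => x (Sum.inr (Sum.inl j)) with hy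
    set z : Fin p → ℂ := fun i => x (Sum.inr (Sum.inr i)) with hz
    have hx1 : ∀ i, x (Sum.inl i) = Complex.I * z i := by
      intro i
      have h2 := congrFun (congrArg (fun (v : EuclideanSpace ℂ (Fin p)) => (v : Fin p → ℂ)) hphix) i
      simp only [phiL, LinearMap.coe_mk, AddHom.coe_mk, Pi.zero_apply] at h2
      have h3 : x (Sum.inl i) - Complex.I * z i = 0 := by simpa using h2
      exact sub_eq_zero.mp h3
    have e1 : ∀ i : Fin p, (starRingEnd ℂ) (-(x (Sum.inr (Sum.inr i)))) * x (Sum.inl i)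
        = -Complex.I * ((Complex.normSq (z i) : ℂ)) := by
      intro i
      rw [hx1 i, map_neg, Complex.normSq_eq_conj_mul_self]
      ring
    have e2 : ∀ j : Fin q, (starRingEnd ℂ) (Complex.I * x (Sum.inr (Sum.inl j))) * x (Sum.inr (Sum.inl j))
        = -Complex.I * ((Complex.normSq (y j) : ℂ)) := by
      intro j
      rw [map_mul, Complex.conj_I, Complex.normSq_eq_conj_mul_self]
      ring
    have e3 : ∀ i : Fin p, (starRingEnd ℂ) (x (Sum.inl i)) * x (Sum.inr (Sum.inr i))
        = -Complex.I * ((Complex.normSq (z i) : ℂ)) := by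
      intro i
      rw [hx1 i, map_mul, Complex.conj_I, Complex.normSq_eq_conj_mul_self]
      ring
    have expand : (inner ℂ ((JL p q) x) x : ℂ)
        = -Complex.I * ((∑ i, (Complex.normSq (z i) : ℂ))
            + ((∑ j, (Complex.normSq (y j) : ℂ)) + ∑ i, (Complex.normSq (z i) : ℂ))) := by
      rw [PiLp.inner_apply, Fintype.sum_sum_type, Fintype.sum_sum_type]
      simp only [RCLike.inner_apply', JL, PiLp.toLp_apply, LinearMap.coe_mk, AddHom.coe_mk, Sum.elim_inl,
        Sum.elim_inr]
      rw [Finset.sum_congr rfl (fun i _ => e1 i), Finset.sum_congr rfl (fun j _ => e2 j),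
        Finset.sum_congr rfl (fun i _ => e3 i), ← Finset.mul_sum, ← Finset.mul_sum]
      ring
    rw [expand] at key
    have hIne : (-Complex.I : ℂ) ≠ 0 := by
      simp [Complex.I_ne_zero]
    have hsumC : ((∑ i, (Complex.normSq (z i) : ℂ))
        + ((∑ j, (Complex.normSq (y j) : ℂ)) + ∑ i, (Complex.normSq (z i) : ℂ))) = 0 :=
      (mul_eq_zero.mp key).resolve_left hIne
    have hsumR : ((∑ i, Complex.normSq (z i))
        + ((∑ j, Complex.normSq (y j)) + ∑ i, Complex.normSq (z i)) : ℝ) = 0 := by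
      exact_mod_cast hsumC
    have hz0 : ∀ i, Complex.normSq (z i) = 0 := by
      have h1 : (0:ℝ) ≤ ∑ i, Complex.normSq (z i) :=
        Finset.sum_nonneg fun i _ => Complex.normSq_nonneg _
      have h2 : (0:ℝ) ≤ ∑ j, Complex.normSq (y j) :=
        Finset.sum_nonneg fun j _ => Complex.normSq_nonneg _
      have hze : (∑ i, Complex.normSq (z i)) = 0 := by linarith
      intro i
      exact le_antisymm (by
        have := (Finset.sum_eq_zero_iff_of_nonneg
          (fun i _ => Complex.normSq_nonneg (z i))).mp hze i (Finset.mem_univ i)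
        exact le_of_eq this) (Complex.normSq_nonneg _)
    have hy0 : ∀ j, Complex.normSq (y j) = 0 := by
      have h1 : (0:ℝ) ≤ ∑ i, Complex.normSq (z i) :=
        Finset.sum_nonneg fun i _ => Complex.normSq_nonneg _
      have h2 : (0:ℝ) ≤ ∑ j, Complex.normSq (y j) :=
        Finset.sum_nonneg fun j _ => Complex.normSq_nonneg _
      have hye : (∑ j, Complex.normSq (y j)) = 0 := by linarith
      intro j
      exact (Finset.sum_eq_zero_iff_of_nonneg
        (fun j _ => Complex.normSq_nonneg (y j))).mp hye j (Finset.mem_univ j)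
    ext a
    rcases a with i | j | i
    · have : z i = 0 := Complex.normSq_eq_zero.mp (hz0 i)
      rw [hx1 i, this, mul_zero]
      rfl
    · exact Complex.normSq_eq_zero.mp (hy0 j)
    · exact Complex.normSq_eq_zero.mp (hz0 i)
  have hinj : Function.Injective ((phiL p q).comp W.subtype) := by
    rw [← LinearMap.ker_eq_bot, LinearMap.ker_eq_bot']
    rintro ⟨x, hx⟩ hm
    have : x = 0 := hzero x hx (by simpa using hm)
    exact Subtype.ext this
  have hWle : Module.finrank ℂ W ≤ p := by
    calc Module.finrank ℂ W ≤ Module.finrank ℂ (EuclideanSpace ℂ (Fin p)) :=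
          LinearMap.finrank_le_finrank_of_injective hinj
      _ = p := by simp
  have hmapeq : Module.finrank ℂ (τ.map (JL p q)) = Module.finrank ℂ τ :=
    ((Submodule.equivMapOfInjective _ (JL_inj p q) τ).finrank_eq).symm
  have htot : Module.finrank ℂ (τ.map (JL p q)) + Module.finrank ℂ W = 2 * p + q := by
    rw [Submodule.finrank_add_finrank_orthogonal]
    simp [finrank_euclideanSpace]
    ring
  constructor
  · omega
  · exact hWle


end
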